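/- arXiv:1809.04383 — 5 statements merged into one kernel-verified Lean document; each statement's English description precedes it below -/
import Mathlib

section
/- With the discrete Helmholtz–Hodge decomposition u = P_h u + 𝒟φ (where 𝒟·(P_h u) = 0 on the interior and P_h u = φ = 0 on ∂Ω_h), the following orthogonality-type estimates hold: Σ_{x∈Ω_h} |P_h u(x)|² ≤ Σ_{x∈Ω_h∖∂Ω_h} |u(x)|², and Σ_{x∈Ω_h∖∂Ω_h} |𝒟φ(x)|² ≤ Σ_{x∈Ω_h∖∂Ω_h} |u(x)|². -/
open Finset MeasureTheory Set Filter

/-- Standard basis vector `e^i` of the integer grid `ℤ³` (grid points `x` represent `h•x ∈ hℤ³`). -/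
def gE (i : Fin 3) : Fin 3 → ℤ := fun j => if j = i then 1 else 0

/-- Forward difference quotient `D_i⁺φ(x) = (φ(x+he^i) − φ(x))/h`. -/
noncomputable def Dp (h : ℝ) (i : Fin 3) (φ : (Fin 3 → ℤ) → ℝ) (x : Fin 3 → ℤ) : ℝ :=
  (φ (x + gE i) - φ x) / h

/-- Centered second difference `D_i²φ(x) = (φ(x+he^i)+φ(x−he^i)−2φ(x))/h²`. -/
noncomputable def Dtwo (h : ℝ) (i : Fin 3) (φ : (Fin 3 → ℤ) → ℝ) (x : Fin 3 → ℤ) : ℝ :=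
  (φ (x + gE i) + φ (x - gE i) - 2 * φ x) / h ^ 2

/-- Discrete (forward) gradient `𝒟φ`. -/
noncomputable def dgrad (h : ℝ) (φ : (Fin 3 → ℤ) → ℝ) (x : Fin 3 → ℤ) : Fin 3 → ℝ :=
  fun i => Dp h i φ x

/-- Discrete (backward) divergence `𝒟·w`. -/
noncomputable def ddiv (h : ℝ) (w : (Fin 3 → ℤ) → Fin 3 → ℝ) (x : Fin 3 → ℤ) : ℝ :=
  ∑ i, (w x i - w (x - gE i) i) / h

/-- Grid boundary `∂Ω_h = {x ∈ Ω_h | {x ± he^i} ⊄ Ω_h}`. -/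
def gBdry (Ω : Finset (Fin 3 → ℤ)) : Finset (Fin 3 → ℤ) :=
  Ω.filter fun x => ¬ (∀ i, (x + gE i) ∈ Ω ∧ (x - gE i) ∈ Ω)

/-- Theorem 2.3, first two estimates: the divergence-free
part `P_h u = w` and gradient part `𝒟φ` of the discrete Helmholtz–Hodge
decomposition are bounded in discrete `L²` by `u`. -/
theorem discrete_hodge_l2_estimates
    (h : ℝ) (hh : 0 < h) (Ω : Finset (Fin 3 → ℤ))
    (u w : (Fin 3 → ℤ) → Fin 3 → ℝ) (φ : (Fin 3 → ℤ) → ℝ)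
    (hw0 : ∀ x, x ∉ Ω → w x = 0) (hφ0 : ∀ x, x ∉ Ω → φ x = 0)
    (hwb : ∀ x ∈ gBdry Ω, w x = 0) (hφb : ∀ x ∈ gBdry Ω, φ x = 0)
    (hdiv : ∀ x ∈ Ω \ gBdry Ω, ddiv h w x = 0)
    (hdec : ∀ x ∈ Ω \ gBdry Ω, w x + dgrad h φ x = u x) :
    (∑ x ∈ Ω, ∑ i, (w x i) ^ 2 ≤ ∑ x ∈ Ω \ gBdry Ω, ∑ i, (u x i) ^ 2) ∧
    (∑ x ∈ Ω \ gBdry Ω, ∑ i, (dgrad h φ x i) ^ 2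
        ≤ ∑ x ∈ Ω \ gBdry Ω, ∑ i, (u x i) ^ 2) := by
  classical
  set I := Ω \ gBdry Ω with hI
  have hwI : ∀ x, x ∉ I → w x = 0 := by
    intro x hx
    by_cases hxΩ : x ∈ Ω
    · exact hwb x (by simp only [hI, Finset.mem_sdiff, hxΩ, true_and, not_not] at hx; exact hx)
    · exact hw0 x hxΩ
  have hφI : ∀ x, x ∉ I → φ x = 0 := by
    intro x hx
    by_cases hxΩ : x ∈ Ω
    · exact hφb x (by simp only [hI, Finset.mem_sdiff, hxΩ, true_and, not_not] at hx; exact hx)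
    · exact hφ0 x hxΩ
  have hmem : ∀ x ∈ I, ∀ i, (x + gE i) ∈ Ω ∧ (x - gE i) ∈ Ω := by
    intro x hx i
    rw [hI, Finset.mem_sdiff, gBdry, Finset.mem_filter] at hx
    have := hx.2
    push_neg at this
    exact this hx.1 i
  -- Summation by parts for each coordinate
  have h2 : ∀ i, ∑ x ∈ Ω, w x i * φ (x + gE i) = ∑ x ∈ Ω, w (x - gE i) i * φ x := by
    intro i
    have e1 : ∑ x ∈ Ω, w x i * φ (x + gE i)
        = ∑ y ∈ Ω.image (· + gE i), w (y - gE i) i * φ y := by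
      rw [Finset.sum_image (fun a _ b _ hab => by
        have : a + gE i - gE i = b + gE i - gE i := by rw [hab]
        simpa using this)]
      simp
    rw [e1]
    set T := Ω.image (· + gE i) ∪ Ω with hT
    have vanish : ∀ y, y ∉ I → w (y - gE i) i * φ y = 0 := by
      intro y hy; rw [hφI y hy, mul_zero]
    have eL : ∑ y ∈ Ω.image (· + gE i), w (y - gE i) i * φ y
        = ∑ y ∈ T, w (y - gE i) i * φ y := by
      refine Finset.sum_subset Finset.subset_union_left ?_
      intro y _ hy
      apply vanish
      intro hyI
      exact hy (Finset.mem_image.2 ⟨y - gE i, (hmem y hyI i).2, by simp⟩)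
    have eR : ∑ y ∈ Ω, w (y - gE i) i * φ y = ∑ y ∈ T, w (y - gE i) i * φ y := by
      refine Finset.sum_subset Finset.subset_union_right ?_
      intro y _ hy
      exact vanish y (fun hyI => hy (Finset.sdiff_subset hyI))
    rw [eL, eR]
  -- Orthogonality
  have orth : ∑ x ∈ I, ∑ i, w x i * dgrad h φ x i = 0 := by
    have e0 : ∑ x ∈ I, ∑ i, w x i * dgrad h φ x i
        = ∑ x ∈ Ω, ∑ i, w x i * dgrad h φ x i := by
      refine Finset.sum_subset Finset.sdiff_subset ?_
      intro x _ hxI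
      apply Finset.sum_eq_zero
      intro i _
      rw [hwI x hxI]; simp
    have e1 : ∑ x ∈ Ω, ∑ i, w x i * dgrad h φ x i
        = ∑ i, (∑ x ∈ Ω, w x i * φ (x + gE i) - ∑ x ∈ Ω, w x i * φ x) / h := by
      rw [Finset.sum_comm]
      refine Finset.sum_congr rfl fun i _ => ?_
      rw [← Finset.sum_sub_distrib, Finset.sum_div]
      refine Finset.sum_congr rfl fun x _ => ?_
      simp only [dgrad, Dp]
      ring
    have e2 : ∑ i, (∑ x ∈ Ω, w x i * φ (x + gE i) - ∑ x ∈ Ω, w x i * φ x) / h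
        = -∑ x ∈ Ω, φ x * ddiv h w x := by
      simp only [h2]
      have e2' : ∀ i : Fin 3, (∑ x ∈ Ω, w (x - gE i) i * φ x - ∑ x ∈ Ω, w x i * φ x) / h
          = ∑ x ∈ Ω, (w (x - gE i) i - w x i) * φ x / h := by
        intro i
        rw [← Finset.sum_sub_distrib, Finset.sum_div]
        refine Finset.sum_congr rfl fun x _ => ?_
        ring
      simp only [e2']
      rw [← Finset.sum_neg_distrib, Finset.sum_comm]
      refine Finset.sum_congr rfl fun x _ => ?_
      rw [ddiv, Finset.mul_sum, ← Finset.sum_neg_distrib]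
      refine Finset.sum_congr rfl fun i _ => ?_
      ring
    have e3 : ∑ x ∈ Ω, φ x * ddiv h w x = 0 := by
      refine Finset.sum_eq_zero fun x hx => ?_
      by_cases hxI : x ∈ I
      · rw [hdiv x hxI, mul_zero]
      · rw [hφI x hxI, zero_mul]
    rw [e0, e1, e2, e3, neg_zero]
  -- Pythagoras
  have pyth : ∑ x ∈ I, ∑ i, (u x i) ^ 2
      = ∑ x ∈ I, ∑ i, (w x i) ^ 2 + ∑ x ∈ I, ∑ i, (dgrad h φ x i) ^ 2
        + 2 * ∑ x ∈ I, ∑ i, w x i * dgrad h φ x i := by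
    rw [Finset.mul_sum, ← Finset.sum_add_distrib, ← Finset.sum_add_distrib]
    refine Finset.sum_congr rfl fun x hx => ?_
    rw [Finset.mul_sum, ← Finset.sum_add_distrib, ← Finset.sum_add_distrib]
    refine Finset.sum_congr rfl fun i _ => ?_
    rw [← hdec x hx]
    simp only [Pi.add_apply]
    ring
  rw [orth, mul_zero, add_zero] at pyth
  have hwΩ : ∑ x ∈ Ω, ∑ i, (w x i) ^ 2 = ∑ x ∈ I, ∑ i, (w x i) ^ 2 := by
    symm
    refine Finset.sum_subset Finset.sdiff_subset ?_
    intro x _ hxI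
    refine Finset.sum_eq_zero fun i _ => ?_
    rw [hwI x hxI]; simp
  have hA : 0 ≤ ∑ x ∈ I, ∑ i, (w x i) ^ 2 :=
    Finset.sum_nonneg fun x _ => Finset.sum_nonneg fun i _ => sq_nonneg _
  have hB : 0 ≤ ∑ x ∈ I, ∑ i, (dgrad h φ x i) ^ 2 :=
    Finset.sum_nonneg fun x _ => Finset.sum_nonneg fun i _ => sq_nonneg _
  constructor
  · rw [hwΩ, pyth]; linarith
  · rw [pyth]; linarith
end

section
/- Suppose a discrete Poincaré inequality Σ_{x∈Ω_h}|φ(x)|² ≤ A Σ_{x∈Ω_h∖∂Ω_h}|𝒟φ(x)|² holds for all φ : Ω_h → ℝ vanishing on ∂Ω_h. If u : Ω_h → ℝ³ vanishes on ∂Ω_h and u = P_h u + 𝒟φ is its discrete Helmholtz–Hodge decomposition, then Σ_{x∈Ω_h∖∂Ω_h} |u(x) − P_h u(x)|² ≤ A Σ_{x∈Ω_h∖∂Ω_h} |𝒟·u(x)|². In particular, if u is discretely divergence free then u = P_h u on the interior. -/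
open Finset MeasureTheory Set Filter

lemma shift_finsum (f : (Fin 3 → ℤ) → ℝ) (c : Fin 3 → ℤ) : ∑ᶠ x, f (x + c) = ∑ᶠ x, f x :=
  finsum_comp_equiv (Equiv.addRight c)

lemma ibp (h : ℝ) (i : Fin 3) (φ v : (Fin 3 → ℤ) → ℝ) (I : Finset (Fin 3 → ℤ))
    (hφ : ∀ x ∉ I, φ x = 0) (hv : ∀ x ∉ I, v x = 0) :
    ∑ x ∈ I, Dp h i φ x * v x = -∑ x ∈ I, φ x * ((v x - v (x - gE i)) / h) := by
  have s1 : Function.support (fun x => Dp h i φ x * v x) ⊆ (I : Set (Fin 3 → ℤ)) := by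
    intro x hx
    by_contra hxI
    exact hx (by simp [hv x hxI])
  have s2 : Function.support (fun x => φ x * ((v x - v (x - gE i)) / h)) ⊆ (I : Set (Fin 3 → ℤ)) := by
    intro x hx
    by_contra hxI
    exact hx (by simp [hφ x hxI])
  have f1 : (Function.support fun x => φ (x + gE i) * v x / h).Finite :=
    I.finite_toSet.subset (by
      intro x hx
      by_contra hxI
      exact hx (by simp [hv x hxI]))
  have f2 : (Function.support fun x => φ x * v x / h).Finite :=
    I.finite_toSet.subset (by
      intro x hx
      by_contra hxI
      exact hx (by simp [hv x hxI]))
  have f3 : (Function.support fun x => φ x * v (x - gE i) / h).Finite :=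
    I.finite_toSet.subset (by
      intro x hx
      by_contra hxI
      exact hx (by simp [hφ x hxI]))
  rw [← finsum_eq_sum_of_support_subset _ s1, ← finsum_eq_sum_of_support_subset _ s2]
  have e1 : ∑ᶠ x, Dp h i φ x * v x
      = ∑ᶠ x, (φ (x + gE i) * v x / h - φ x * v x / h) := by
    congr 1; funext x; simp only [Dp]; ring
  have e2 : ∑ᶠ x, φ (x + gE i) * v x / h = ∑ᶠ x, φ x * v (x - gE i) / h := by
    rw [← shift_finsum (fun x => φ x * v (x - gE i) / h) (gE i)]
    congr 1; funext x; rw [add_sub_cancel_right]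
  have e3 : ∑ᶠ x, φ x * ((v x - v (x - gE i)) / h)
      = (∑ᶠ x, φ x * v x / h) - ∑ᶠ x, φ x * v (x - gE i) / h := by
    rw [← finsum_sub_distrib f2 f3]
    congr 1; funext x; ring
  rw [e1, finsum_sub_distrib f1 f2, e2, e3]
  ring

lemma ibp_div (h : ℝ) (φ : (Fin 3 → ℤ) → ℝ) (v : (Fin 3 → ℤ) → Fin 3 → ℝ)
    (I : Finset (Fin 3 → ℤ))
    (hφ : ∀ x ∉ I, φ x = 0) (hv : ∀ x ∉ I, v x = 0) :
    ∑ x ∈ I, ∑ i, Dp h i φ x * v x i = -∑ x ∈ I, φ x * ddiv h v x := by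
  rw [Finset.sum_comm]
  have key : ∀ i : Fin 3, ∑ x ∈ I, Dp h i φ x * v x i
      = -∑ x ∈ I, φ x * ((v x i - v (x - gE i) i) / h) := fun i =>
    ibp h i φ (fun x => v x i) I hφ (fun x hx => by show v x i = 0; rw [hv x hx]; rfl)
  simp_rw [key, Finset.sum_neg_distrib]
  congr 1
  rw [Finset.sum_comm]
  refine Finset.sum_congr rfl fun x _ => ?_
  rw [ddiv, Finset.mul_sum]

/-- Theorem 2.3, estimate (2.4): if a discrete Poincaré
inequality with constant `A` holds and `u` vanishes on `∂Ω_h`, then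
`Σ|u − P_h u|² ≤ A Σ|𝒟·u|²`; in particular discretely divergence-free `u`
coincides with `P_h u` on the interior. -/
theorem projection_error_bound
    (h A : ℝ) (hh : 0 < h) (hA : 0 < A) (Ω : Finset (Fin 3 → ℤ))
    (hPoincare : ∀ ψ : (Fin 3 → ℤ) → ℝ, (∀ x, x ∉ Ω → ψ x = 0) →
      (∀ x ∈ gBdry Ω, ψ x = 0) →
      ∑ x ∈ Ω, (ψ x) ^ 2 ≤ A * ∑ x ∈ Ω \ gBdry Ω, ∑ i, (dgrad h ψ x i) ^ 2)
    (u w : (Fin 3 → ℤ) → Fin 3 → ℝ) (φ : (Fin 3 → ℤ) → ℝ)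
    (hu0 : ∀ x, x ∉ Ω → u x = 0) (hub : ∀ x ∈ gBdry Ω, u x = 0)
    (hw0 : ∀ x, x ∉ Ω → w x = 0) (hφ0 : ∀ x, x ∉ Ω → φ x = 0)
    (hwb : ∀ x ∈ gBdry Ω, w x = 0) (hφb : ∀ x ∈ gBdry Ω, φ x = 0)
    (hdiv : ∀ x ∈ Ω \ gBdry Ω, ddiv h w x = 0)
    (hdec : ∀ x ∈ Ω \ gBdry Ω, w x + dgrad h φ x = u x) :
    (∑ x ∈ Ω \ gBdry Ω, ∑ i, (u x i - w x i) ^ 2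
        ≤ A * ∑ x ∈ Ω \ gBdry Ω, (ddiv h u x) ^ 2) ∧
    ((∀ x ∈ Ω \ gBdry Ω, ddiv h u x = 0) → ∀ x ∈ Ω \ gBdry Ω, u x = w x) := by
  set I := Ω \ gBdry Ω with hIdef
  have memI : ∀ x, x ∉ I → x ∉ Ω ∨ x ∈ gBdry Ω := by
    intro x hx
    by_cases hxΩ : x ∈ Ω
    · right
      by_contra hb
      exact hx (Finset.mem_sdiff.2 ⟨hxΩ, hb⟩)
    · exact Or.inl hxΩ
  have hφI : ∀ x ∉ I, φ x = 0 := fun x hx =>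
    (memI x hx).elim (hφ0 x) (hφb x)
  have huI : ∀ x ∉ I, u x = 0 := fun x hx =>
    (memI x hx).elim (hu0 x) (hub x)
  have hwI : ∀ x ∉ I, w x = 0 := fun x hx =>
    (memI x hx).elim (hw0 x) (hwb x)
  have hgrad : ∀ x ∈ I, ∀ i, Dp h i φ x = u x i - w x i := by
    intro x hx i
    have := congrFun (hdec x hx) i
    simp only [Pi.add_apply, dgrad] at this
    linarith
  set S := ∑ x ∈ I, ∑ i, (u x i - w x i) ^ 2 with hSdef
  set T := ∑ x ∈ I, (ddiv h u x) ^ 2 with hTdef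
  have hS0 : 0 ≤ S := Finset.sum_nonneg fun x _ => Finset.sum_nonneg fun i _ => sq_nonneg _
  have hT0 : 0 ≤ T := Finset.sum_nonneg fun x _ => sq_nonneg _
  have key : S = -∑ x ∈ I, φ x * ddiv h u x := by
    have h1 : S = (∑ x ∈ I, ∑ i, Dp h i φ x * u x i)
        - ∑ x ∈ I, ∑ i, Dp h i φ x * w x i := by
      rw [hSdef, ← Finset.sum_sub_distrib]
      refine Finset.sum_congr rfl fun x hx => ?_
      rw [← Finset.sum_sub_distrib]
      refine Finset.sum_congr rfl fun i _ => ?_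
      rw [hgrad x hx i]
      ring
    rw [h1, ibp_div h φ u I hφI huI, ibp_div h φ w I hφI hwI]
    have hz : ∑ x ∈ I, φ x * ddiv h w x = 0 :=
      Finset.sum_eq_zero fun x hx => by rw [hdiv x hx, mul_zero]
    rw [hz]
    ring
  have hcs : S ^ 2 ≤ (∑ x ∈ I, (φ x) ^ 2) * T := by
    have := Finset.sum_mul_sq_le_sq_mul_sq I (fun x => φ x) (fun x => ddiv h u x)
    calc S ^ 2 = (∑ x ∈ I, φ x * ddiv h u x) ^ 2 := by rw [key]; ring
      _ ≤ _ := this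
  have hpo : ∑ x ∈ Ω, (φ x) ^ 2 ≤ A * S := by
    have := hPoincare φ hφ0 hφb
    have hSeq : ∑ x ∈ I, ∑ i, (dgrad h φ x i) ^ 2 = S := by
      refine Finset.sum_congr rfl fun x hx => Finset.sum_congr rfl fun i _ => ?_
      rw [show dgrad h φ x i = Dp h i φ x from rfl, hgrad x hx i]
    rw [hSeq] at this
    exact this
  have hsub : ∑ x ∈ I, (φ x) ^ 2 ≤ ∑ x ∈ Ω, (φ x) ^ 2 :=
    Finset.sum_le_sum_of_subset_of_nonneg (Finset.sdiff_subset)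
      (fun x _ _ => sq_nonneg _)
  have hcs' : S ^ 2 ≤ A * S * T := by
    calc S ^ 2 ≤ (∑ x ∈ I, (φ x) ^ 2) * T := hcs
      _ ≤ (A * S) * T := mul_le_mul_of_nonneg_right (le_trans hsub hpo) hT0
  have main : S ≤ A * T := by
    rcases eq_or_lt_of_le hS0 with h0 | h0
    · rw [← h0]
      positivity
    · nlinarith
  refine ⟨main, fun hz x hx => ?_⟩
  have hT' : T = 0 := Finset.sum_eq_zero fun x hx => by rw [hz x hx]; ring
  have hS' : S = 0 := le_antisymm (by rw [hT'] at main; linarith) hS0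
  have hx0 : ∀ x ∈ I, ∑ i, (u x i - w x i) ^ 2 = 0 := by
    intro y hy
    have := (Finset.sum_eq_zero_iff_of_nonneg
      (fun x _ => Finset.sum_nonneg fun i _ => sq_nonneg (u x i - w x i))).1 hS'
    exact this y hy
  funext i
  have h2 := (Finset.sum_eq_zero_iff_of_nonneg
    (fun j (_ : j ∈ Finset.univ) => sq_nonneg (u x j - w x j))).1 (hx0 x hx) i (Finset.mem_univ i)
  have := sq_eq_zero_iff.1 h2
  linarith
end

section
/- Unconditional solvability of the implicit step: let Ω_h ⊂ hℤ³ be finite with boundary ∂Ω_h, and let u^n : Ω_h → ℝ³ satisfy 𝒟·u^n = 0 on Ω_h∖∂Ω_h and u^n = 0 on ∂Ω_h. Then for any mesh sizes h, τ > 0 and any data f^{n+1} : Ω_h → ℝ³, the implicit finite-difference system (u_i^{n+½}(x) − u_i^n(x))/τ = −Σ_j ( u_j^n(x−he^j) D_j⁺u_i^{n+½}(x−he^j) + u_j^n(x) D_j⁺u_i^{n+½}(x) )/2 + Σ_j D_j² u_i^{n+½}(x) + f_i^{n+1}(x) for x ∈ Ω_h∖∂Ω_h, i = 1,2,3, together with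 u^{n+½} = 0 on ∂Ω_h, has a unique solution u^{n+½} : Ω_h → ℝ³. -/
open Finset MeasureTheory Set Filter

/-! Test the homogeneous system against its solution `v`. The mass term gives `‖v‖² / τ`; the
skew-symmetric convection term sums by parts to `-½ Σ (𝒟·uⁿ) |v|²`, which vanishes because `uⁿ`
is discretely divergence free where `v` lives; the diffusion term sums by parts to
`-Σ_j ‖D_j⁺ v‖² ≤ 0`. So the homogeneous system has only the trivial solution, and for a square
linear system in the finitely many interior unknowns uniqueness gives existence. -/

section Telescoping

variable {G : Type*} [AddGroup G]

theorem Finset.sum_sub_comp_add_eq_zero {R : Type*} [AddCommGroup R] (s : Finset G) (e : G)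
    (Q : G → R) (hQ : ∀ x, Q x ≠ 0 → x ∈ s ∧ x - e ∈ s) :
    ∑ x ∈ s, (Q (x + e) - Q x) = 0 := by
  rw [sum_sub_distrib, sub_eq_zero]
  calc ∑ x ∈ s, Q (x + e) = ∑ᶠ x, Q (x + e) :=
        (finsum_eq_sum_of_support_subset _ fun x hx => by
          simpa using (hQ (x + e) hx).2).symm
    _ = ∑ᶠ x, Q x := finsum_comp_equiv (Equiv.addRight e)
    _ = ∑ x ∈ s, Q x := finsum_eq_sum_of_support_subset _ fun x hx => (hQ x hx).1

variable {R : Type*} [CommRing R]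

theorem Finset.sum_mul_skew_diff (s : Finset G) (e : G) (a φ : G → R)
    (hφ : ∀ x ∉ s, φ x = 0) :
    ∑ x ∈ s, φ x * (a (x - e) * (φ x - φ (x - e)) + a x * (φ (x + e) - φ x))
      = ∑ x ∈ s, (a (x - e) - a x) * φ x ^ 2 := by
  rw [← sub_eq_zero, ← sum_sub_distrib]
  have hQ : ∀ x, a (x - e) * φ (x - e) * φ x ≠ 0 → x ∈ s ∧ x - e ∈ s := fun x hx =>
    ⟨not_imp_comm.mp (hφ x) (right_ne_zero_of_mul hx),
      not_imp_comm.mp (hφ _) (right_ne_zero_of_mul (left_ne_zero_of_mul hx))⟩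
  rw [← s.sum_sub_comp_add_eq_zero e _ hQ]
  refine sum_congr rfl fun x _ => ?_
  rw [add_sub_cancel_right]
  ring

theorem Finset.sum_mul_second_diff_nonpos [LinearOrder R] [IsStrictOrderedRing R]
    (s : Finset G) (e : G) (φ : G → R) (hφ : ∀ x ∉ s, φ x = 0) :
    ∑ x ∈ s, φ x * (φ (x + e) + φ (x - e) - 2 * φ x) ≤ 0 := by
  classical
  set S := s ∪ s.image (· - e)
  have hsS : s ⊆ S := subset_union_left
  have hQ : ∀ x, φ x * (φ x - φ (x - e)) ≠ 0 → x ∈ S ∧ x - e ∈ S := fun x hx =>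
    have hxs := not_imp_comm.mp (hφ x) (left_ne_zero_of_mul hx)
    ⟨hsS hxs, mem_union_right _ (mem_image_of_mem _ hxs)⟩
  -- summation by parts; `S` is large enough for the boundary terms to telescope away
  calc ∑ x ∈ s, φ x * (φ (x + e) + φ (x - e) - 2 * φ x)
      = ∑ x ∈ S, φ x * (φ (x + e) + φ (x - e) - 2 * φ x) :=
        sum_subset hsS fun x _ hx => by rw [hφ x hx, zero_mul]
    _ = ∑ x ∈ S, ((φ (x + e) * (φ (x + e) - φ (x + e - e)) - φ x * (φ x - φ (x - e)))
          - (φ (x + e) - φ x) ^ 2) :=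
        sum_congr rfl fun x _ => by rw [add_sub_cancel_right]; ring
    _ = -∑ x ∈ S, (φ (x + e) - φ x) ^ 2 := by
        rw [sum_sub_distrib, S.sum_sub_comp_add_eq_zero e _ hQ, zero_sub]
    _ ≤ 0 := neg_nonpos.mpr (sum_nonneg fun x _ => sq_nonneg _)

end Telescoping

section FiniteDimensional

variable {α K M : Type*} [Field K] [AddCommGroup M] [Module K M] [FiniteDimensional K M]

theorem LinearMap.existsUnique_vanishing_off_of_uniqueness (s : Finset α)
    (A : (α → M) →ₗ[K] α → M)
    (hA : ∀ v : α → M, (∀ x ∉ s, v x = 0) → (∀ x ∈ s, A v x = 0) → v = 0) (g : α → M) :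
    ∃! v : α → M, (∀ x ∉ s, v x = 0) ∧ ∀ x ∈ s, A v x = g x := by
  classical
  let P : Submodule K (α → M) := Submodule.pi (↑s)ᶜ fun _ => ⊥
  have mem_P : ∀ v, v ∈ P ↔ ∀ x ∉ s, v x = 0 := fun v => by simp [P, Submodule.mem_pi]
  have : FiniteDimensional K P := by
    refine Module.Finite.of_injective ((LinearMap.funLeft K M ((↑) : s → α)).comp P.subtype)
      fun v w hvw => Subtype.ext (funext fun x => ?_)
    by_cases hx : x ∈ s
    · exact congrFun hvw ⟨x, hx⟩
    · rw [(mem_P v).mp v.2 x hx, (mem_P w).mp w.2 x hx]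
  let π : (α → M) →ₗ[K] α → M := LinearMap.pi fun x => if x ∈ s then LinearMap.proj x else 0
  have π_apply : ∀ v x, π v x = if x ∈ s then v x else 0 := fun v x => by
    by_cases hx : x ∈ s <;> simp [π, hx]
  have π_mem : ∀ v, π v ∈ P := fun v => (mem_P _).mpr fun x hx => by simp [π_apply, hx]
  let Φ : P →ₗ[K] P := (π ∘ₗ A ∘ₗ P.subtype).codRestrict P fun v => π_mem _
  have hΦ : Function.Injective Φ := by
    refine (injective_iff_map_eq_zero Φ).mpr fun v hv => Subtype.ext ?_
    refine hA v ((mem_P v).mp v.2) fun x hx => ?_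
    simpa [Φ, π_apply, hx] using congrFun (congrArg Subtype.val hv) x
  obtain ⟨v, hv⟩ := LinearMap.injective_iff_surjective.mp hΦ ⟨π g, π_mem g⟩
  refine ⟨v, ⟨(mem_P v).mp v.2, fun x hx => ?_⟩, fun w ⟨hw0, hw⟩ => ?_⟩
  · simpa [Φ, π_apply, hx] using congrFun (congrArg Subtype.val hv) x
  · refine sub_eq_zero.mp (hA (w - v) (fun x hx => ?_) fun x hx => ?_)
    · rw [Pi.sub_apply, hw0 x hx, (mem_P v).mp v.2 x hx, sub_zero]
    · simpa [Φ, π_apply, hx, hw x hx, sub_eq_zero] using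
        (congrFun (congrArg Subtype.val hv) x).symm

end FiniteDimensional

section ImplicitStep

variable (h τ : ℝ) (un : (Fin 3 → ℤ) → Fin 3 → ℝ)

/-- One scalar component of the implicit step, moved to the form `A φ = u^n / τ + f`. -/
noncomputable def implicitStepOp (φ : (Fin 3 → ℤ) → ℝ) (x : Fin 3 → ℤ) : ℝ :=
  φ x / τ + (∑ j, (un (x - gE j) j * Dp h j φ (x - gE j) + un x j * Dp h j φ x) / 2)
    - ∑ j, Dtwo h j φ x

noncomputable def implicitStepLinearMap :
    ((Fin 3 → ℤ) → Fin 3 → ℝ) →ₗ[ℝ] (Fin 3 → ℤ) → Fin 3 → ℝ where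
  toFun v x i := implicitStepOp h τ un (fun y => v y i) x
  map_add' v w := by
    funext x i
    simp only [implicitStepOp, Dp, Dtwo, Pi.add_apply, Fin.sum_univ_three]
    ring
  map_smul' c v := by
    funext x i
    simp only [implicitStepOp, Dp, Dtwo, Pi.smul_apply, smul_eq_mul, RingHom.id_apply,
      Fin.sum_univ_three]
    ring

variable {h τ un} {T : Finset (Fin 3 → ℤ)} {φ : (Fin 3 → ℤ) → ℝ}

theorem sum_mul_convection (hφ : ∀ x ∉ T, φ x = 0) :
    ∑ x ∈ T, φ x * (∑ j, (un (x - gE j) j * Dp h j φ (x - gE j) + un x j * Dp h j φ x) / 2)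
      = -(∑ x ∈ T, ddiv h un x * φ x ^ 2) / 2 := by
  have hj : ∀ j, ∑ x ∈ T, φ x * (un (x - gE j) j * Dp h j φ (x - gE j) + un x j * Dp h j φ x)
      = (∑ x ∈ T, (un (x - gE j) j - un x j) * φ x ^ 2) / h := fun j => by
    rw [← T.sum_mul_skew_diff (gE j) (fun y => un y j) φ hφ, sum_div]
    refine sum_congr rfl fun x _ => ?_
    simp only [Dp, sub_add_cancel]
    ring
  calc _ = ∑ j, (∑ x ∈ T,
          φ x * (un (x - gE j) j * Dp h j φ (x - gE j) + un x j * Dp h j φ x)) / 2 := by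
        simp only [mul_div_assoc', mul_sum, sum_div]
        exact sum_comm
    _ = _ := by
        simp only [hj, ddiv, sum_mul, sum_div, neg_div, ← sum_neg_distrib]
        rw [sum_comm]
        exact sum_congr rfl fun x _ => sum_congr rfl fun j _ => by ring

theorem sum_mul_Dtwo_nonpos (hφ : ∀ x ∉ T, φ x = 0) (j : Fin 3) :
    ∑ x ∈ T, φ x * Dtwo h j φ x ≤ 0 := by
  simp only [Dtwo, mul_div_assoc', ← sum_div]
  exact div_nonpos_of_nonpos_of_nonneg (T.sum_mul_second_diff_nonpos _ φ hφ) (sq_nonneg h)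

theorem sum_sq_div_le_sum_mul_implicitStepOp (hdiv : ∀ x ∈ T, ddiv h un x = 0)
    (hφ : ∀ x ∉ T, φ x = 0) :
    (∑ x ∈ T, φ x ^ 2) / τ ≤ ∑ x ∈ T, φ x * implicitStepOp h τ un φ x := by
  have hconv := sum_mul_convection (h := h) (un := un) hφ
  have hdiv0 : ∑ x ∈ T, ddiv h un x * φ x ^ 2 = 0 :=
    sum_eq_zero fun x hx => by rw [hdiv x hx, zero_mul]
  rw [hdiv0, neg_zero, zero_div] at hconv
  have hdiff : ∑ x ∈ T, φ x * ∑ j, Dtwo h j φ x ≤ 0 := by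
    simp only [mul_sum]
    rw [sum_comm]
    exact sum_nonpos fun j _ => sum_mul_Dtwo_nonpos hφ j
  have hmass : ∑ x ∈ T, φ x * (φ x / τ) = (∑ x ∈ T, φ x ^ 2) / τ := by
    rw [sum_div]
    exact sum_congr rfl fun x _ => by ring
  simp only [implicitStepOp, mul_sub, mul_add, sum_add_distrib, sum_sub_distrib, hmass, hconv]
  linarith

theorem eq_zero_of_implicitStepOp_eq_zero (hτ : 0 < τ) (hdiv : ∀ x ∈ T, ddiv h un x = 0)
    (hφ : ∀ x ∉ T, φ x = 0) (hop : ∀ x ∈ T, implicitStepOp h τ un φ x = 0) : φ = 0 := by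
  have henergy := sum_sq_div_le_sum_mul_implicitStepOp (τ := τ) hdiv hφ
  have hop0 : ∑ x ∈ T, φ x * implicitStepOp h τ un φ x = 0 :=
    sum_eq_zero fun x hx => by rw [hop x hx, mul_zero]
  rw [hop0, div_le_iff₀ hτ, zero_mul] at henergy
  have hsq := (sum_eq_zero_iff_of_nonneg fun x _ => sq_nonneg (φ x)).mp
    (le_antisymm henergy (sum_nonneg fun x _ => sq_nonneg (φ x)))
  funext x
  by_cases hx : x ∈ T
  · exact pow_eq_zero_iff two_ne_zero |>.mp (hsq x hx)
  · exact hφ x hx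

end ImplicitStep

theorem implicit_step_unique_solvability_general
    (h τ : ℝ) (hτ : 0 < τ) (Ω : Finset (Fin 3 → ℤ))
    (un f : (Fin 3 → ℤ) → Fin 3 → ℝ)
    (hdiv : ∀ x ∈ Ω \ gBdry Ω, ddiv h un x = 0) :
    ∃! v : (Fin 3 → ℤ) → Fin 3 → ℝ,
      (∀ x, x ∉ Ω → v x = 0) ∧ (∀ x ∈ gBdry Ω, v x = 0) ∧
      ∀ x ∈ Ω \ gBdry Ω, ∀ i : Fin 3,
        (v x i - un x i) / τ =
          -(∑ j, (un (x - gE j) j * Dp h j (fun y => v y i) (x - gE j)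
              + un x j * Dp h j (fun y => v y i) x) / 2)
          + (∑ j, Dtwo h j (fun y => v y i) x) + f x i := by
  have hsolve := (implicitStepLinearMap h τ un).existsUnique_vanishing_off_of_uniqueness
    (Ω \ gBdry Ω)
    (fun v hv hAv => funext fun x => funext fun i => congrFun
      (eq_zero_of_implicitStepOp_eq_zero hτ hdiv (fun y hy => congrFun (hv y hy) i)
        fun y hy => congrFun (hAv y hy) i) x)
    (fun x i => un x i / τ + f x i)
  refine (existsUnique_congr fun v => ?_).mp hsolve
  rw [← and_assoc]
  refine and_congr ?_ (forall₂_congr fun x _ => funext_iff.trans (forall_congr' fun i => ?_))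
  · simp only [Finset.mem_sdiff, not_and_or, not_not, or_imp, forall_and]
  · change implicitStepOp h τ un (fun y => v y i) x = _ ↔ _
    rw [implicitStepOp, sub_div]
    constructor <;> intro <;> linarith

/-- Theorem 3.1: unconditional unique solvability of the
implicit finite-difference step. -/
theorem implicit_step_unique_solvability
    (h τ : ℝ) (hh : 0 < h) (hτ : 0 < τ) (Ω : Finset (Fin 3 → ℤ))
    (un f : (Fin 3 → ℤ) → Fin 3 → ℝ)
    (hun0 : ∀ x, x ∉ Ω → un x = 0) (hunb : ∀ x ∈ gBdry Ω, un x = 0)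
    (hdiv : ∀ x ∈ Ω \ gBdry Ω, ddiv h un x = 0) :
    ∃! v : (Fin 3 → ℤ) → Fin 3 → ℝ,
      (∀ x, x ∉ Ω → v x = 0) ∧ (∀ x ∈ gBdry Ω, v x = 0) ∧
      ∀ x ∈ Ω \ gBdry Ω, ∀ i : Fin 3,
        (v x i - un x i) / τ =
          -(∑ j, (un (x - gE j) j * Dp h j (fun y => v y i) (x - gE j)
              + un x j * Dp h j (fun y => v y i) x) / 2)
          + (∑ j, Dtwo h j (fun y => v y i) x) + f x i :=
  implicit_step_unique_solvability_general h τ hτ Ω un f hdiv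
end

section
/- A priori energy bound for one implicit step: under the hypotheses of the unconditional solvability theorem (u^n discretely divergence free, u^n = 0 on ∂Ω_h, u^{n+½} solving the implicit scheme with forcing f^{n+1}), the solution satisfies ‖u^{n+½}‖_{Ω_h}² + τ Σ_{j=1}^{3} ‖D_j⁺u^{n+½}‖_{Ω_h}² ≤ (u^n, u^{n+½})_{Ω_h} + τ (f^{n+1}, u^{n+½})_{Ω_h}, and consequently ‖u^{n+½}‖_{Ω_h} ≤ ‖u^n‖_{Ω_h} + τ ‖f^{n+1}‖_{Ω_h}. -/
open Finset MeasureTheory Set Filter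

/-- Discrete `L²` inner product `(u,w)_{Ω_h} = Σ_x u(x)·w(x) h³`. -/
noncomputable def dIP (h : ℝ) (Ω : Finset (Fin 3 → ℤ))
    (u w : (Fin 3 → ℤ) → Fin 3 → ℝ) : ℝ :=
  ∑ x ∈ Ω, (∑ i, u x i * w x i) * h ^ 3

/-!
Pairing the scheme with `u^{n+½}` and summing over `Ω_h` turns every difference quotient into a
shifted sum. Since `u^{n+½}` vanishes off the interior `Ω_h ∖ ∂Ω_h`, every shift by `±he^j` maps
the support back into `Ω_h`, so summation by parts holds with no boundary terms: the discrete
Laplacian contributes `-Σ_j ‖D_j⁺u^{n+½}‖²`, while the skew-symmetric convection term collapses to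
`-Σ_x |u^{n+½}(x)|² (𝒟·u^n)(x) / 2 = 0`. This gives the energy identity, and Cauchy–Schwarz on its
right-hand side gives the norm bound.
-/

noncomputable def skewConv (h : ℝ) (a : (Fin 3 → ℤ) → Fin 3 → ℝ) (φ : (Fin 3 → ℤ) → ℝ)
    (x : Fin 3 → ℤ) : ℝ :=
  ∑ j, (a (x - gE j) j * Dp h j φ (x - gE j) + a x j * Dp h j φ x) / 2

theorem Finset.sum_comp_add_eq_of_vanishing {G M : Type*} [AddGroup G] [AddCommMonoid M]
    (s : Finset G) (e : G) {F : G → M} (hF : ∀ x ∉ s, F x = 0)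
    (hFe : ∀ x ∉ s, F (x + e) = 0) :
    ∑ x ∈ s, F (x + e) = ∑ x ∈ s, F x := by
  rw [← finsum_eq_sum_of_support_subset _ (Function.support_subset_iff'.2 hFe),
    ← finsum_eq_sum_of_support_subset _ (Function.support_subset_iff'.2 hF)]
  exact finsum_comp_equiv (Equiv.addRight e)

section Grid

variable {Ω : Finset (Fin 3 → ℤ)} {φ : (Fin 3 → ℤ) → ℝ}

theorem mem_of_add_gE_mem_interior {x : Fin 3 → ℤ} {j : Fin 3}
    (hx : x + gE j ∈ Ω \ gBdry Ω) : x ∈ Ω := by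
  simp only [gBdry, Finset.mem_sdiff, mem_filter, not_and, not_not] at hx
  simpa using ((hx.2 hx.1) j).2

theorem sum_comp_sub_gE_mul (hφ : ∀ x ∉ Ω \ gBdry Ω, φ x = 0) (j : Fin 3)
    (F : (Fin 3 → ℤ) → ℝ) :
    ∑ x ∈ Ω, F (x - gE j) * φ x = ∑ x ∈ Ω, F x * φ (x + gE j) := by
  have hshift := sum_comp_add_eq_of_vanishing Ω (-gE j)
    (F := fun x => F x * φ (x + gE j))
    (fun x hx => by rw [hφ _ fun hx' => hx (mem_of_add_gE_mem_interior hx'), mul_zero])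
    (fun x hx => by
      rw [neg_add_cancel_right, hφ x fun hx' => hx (Finset.mem_sdiff.1 hx').1, mul_zero])
  simpa [← sub_eq_add_neg] using hshift

theorem sum_Dtwo_mul_self (hφ : ∀ x ∉ Ω \ gBdry Ω, φ x = 0) (h : ℝ) (j : Fin 3) :
    ∑ x ∈ Ω, Dtwo h j φ x * φ x = -∑ x ∈ Ω, Dp h j φ x ^ 2 := by
  have hsplit : ∀ x, Dtwo h j φ x * φ x
      = (Dp h j φ x * φ x - Dp h j φ (x - gE j) * φ x) / h := by
    intro x
    simp only [Dtwo, Dp, sub_add_cancel]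
    ring
  calc ∑ x ∈ Ω, Dtwo h j φ x * φ x
      = (∑ x ∈ Ω, Dp h j φ x * φ x - ∑ x ∈ Ω, Dp h j φ (x - gE j) * φ x) / h := by
        simp only [hsplit, ← sum_div, sum_sub_distrib]
    _ = (∑ x ∈ Ω, Dp h j φ x * φ x - ∑ x ∈ Ω, Dp h j φ x * φ (x + gE j)) / h := by
        rw [sum_comp_sub_gE_mul hφ]
    _ = -∑ x ∈ Ω, Dp h j φ x ^ 2 := by
        rw [← sum_sub_distrib, sum_div, ← sum_neg_distrib]
        refine sum_congr rfl fun x _ => ?_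
        simp only [Dp]
        ring

theorem sum_convection_mul_self (hφ : ∀ x ∉ Ω \ gBdry Ω, φ x = 0) (h : ℝ) (j : Fin 3)
    (a : (Fin 3 → ℤ) → ℝ) :
    ∑ x ∈ Ω, (a (x - gE j) * Dp h j φ (x - gE j) + a x * Dp h j φ x) * φ x
      = -∑ x ∈ Ω, (a x - a (x - gE j)) / h * φ x ^ 2 := by
  have hφsq : ∀ x ∉ Ω \ gBdry Ω, φ x ^ 2 = 0 := fun x hx => by simp [hφ x hx]
  calc ∑ x ∈ Ω, (a (x - gE j) * Dp h j φ (x - gE j) + a x * Dp h j φ x) * φ x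
      = ∑ x ∈ Ω, a x * Dp h j φ x * φ (x + gE j) + ∑ x ∈ Ω, a x * Dp h j φ x * φ x := by
        simp only [add_mul, sum_add_distrib]
        congr 1
        exact sum_comp_sub_gE_mul hφ j fun y => a y * Dp h j φ y
    _ = (∑ x ∈ Ω, a x * φ (x + gE j) ^ 2 - ∑ x ∈ Ω, a x * φ x ^ 2) / h := by
        rw [← sum_add_distrib, ← sum_sub_distrib, sum_div]
        refine sum_congr rfl fun x _ => ?_
        simp only [Dp]
        ring
    _ = (∑ x ∈ Ω, a (x - gE j) * φ x ^ 2 - ∑ x ∈ Ω, a x * φ x ^ 2) / h := by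
        rw [sum_comp_sub_gE_mul hφsq]
    _ = -∑ x ∈ Ω, (a x - a (x - gE j)) / h * φ x ^ 2 := by
        rw [← sum_sub_distrib, sum_div, ← sum_neg_distrib]
        refine sum_congr rfl fun x _ => ?_
        ring

theorem sum_skewConv_mul_self_eq_zero (hφ : ∀ x ∉ Ω \ gBdry Ω, φ x = 0) (h : ℝ)
    {a : (Fin 3 → ℤ) → Fin 3 → ℝ} (ha : ∀ x ∈ Ω \ gBdry Ω, ddiv h a x = 0) :
    ∑ x ∈ Ω, skewConv h a φ x * φ x = 0 := by
  calc ∑ x ∈ Ω, skewConv h a φ x * φ x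
      = (∑ j, ∑ x ∈ Ω, (a (x - gE j) j * Dp h j φ (x - gE j) + a x j * Dp h j φ x) * φ x) / 2 := by
        simp only [skewConv, ← sum_div, sum_mul, div_mul_eq_mul_div]
        rw [sum_comm]
    _ = -(∑ x ∈ Ω, ddiv h a x * φ x ^ 2) / 2 := by
        rw [sum_congr rfl fun j _ => sum_convection_mul_self hφ h j fun y => a y j]
        simp only [sum_neg_distrib, ddiv, sum_mul]
        rw [sum_comm]
    _ = 0 := by
        rw [sum_eq_zero fun x _ => ?_, neg_zero, zero_div]
        by_cases hx : x ∈ Ω \ gBdry Ω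
        · rw [ha x hx, zero_mul]
        · rw [hφ x hx, sq, mul_zero, mul_zero]

theorem energy_identity {τ h : ℝ} (hτ : τ ≠ 0) (hφ : ∀ x ∉ Ω \ gBdry Ω, φ x = 0)
    {a : (Fin 3 → ℤ) → Fin 3 → ℝ} (ha : ∀ x ∈ Ω \ gBdry Ω, ddiv h a x = 0)
    {ψ g : (Fin 3 → ℤ) → ℝ}
    (hscheme : ∀ x ∈ Ω \ gBdry Ω,
      (φ x - ψ x) / τ = -skewConv h a φ x + ∑ j, Dtwo h j φ x + g x) :
    ∑ x ∈ Ω, φ x * φ x + τ * ∑ j, ∑ x ∈ Ω, Dp h j φ x ^ 2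
      = ∑ x ∈ Ω, ψ x * φ x + τ * ∑ x ∈ Ω, g x * φ x := by
  have hpair : ∀ x ∈ Ω, (φ x - ψ x) * φ x
      = τ * ((-skewConv h a φ x + ∑ j, Dtwo h j φ x + g x) * φ x) := by
    intro x _
    by_cases hx : x ∈ Ω \ gBdry Ω
    · rw [← hscheme x hx]
      field_simp
    · rw [hφ x hx]
      ring
  have hsum := sum_congr rfl hpair
  simp only [← mul_sum, add_mul, sum_add_distrib, neg_mul, sum_neg_distrib, sub_mul,
    sum_sub_distrib, sum_skewConv_mul_self_eq_zero hφ h ha, sum_mul] at hsum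
  rw [sum_comm] at hsum
  simp only [sum_Dtwo_mul_self hφ, sum_neg_distrib] at hsum
  linear_combination hsum

end Grid

section InnerProduct

variable {h : ℝ} {Ω : Finset (Fin 3 → ℤ)}

theorem dIP_eq_sum_components (u w : (Fin 3 → ℤ) → Fin 3 → ℝ) :
    dIP h Ω u w = h ^ 3 * ∑ i, ∑ x ∈ Ω, u x i * w x i := by
  simp only [dIP, sum_mul, mul_sum]
  rw [sum_comm]
  exact sum_congr rfl fun i _ => sum_congr rfl fun x _ => mul_comm _ _

theorem dIP_eq_sum_sqrt_mul_sqrt (hh : 0 ≤ h) (u w : (Fin 3 → ℤ) → Fin 3 → ℝ) :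
    dIP h Ω u w = ∑ p ∈ Ω ×ˢ Finset.univ, (√(h ^ 3) * u p.1 p.2) * (√(h ^ 3) * w p.1 p.2) := by
  have hsq := Real.mul_self_sqrt (pow_nonneg hh 3)
  rw [dIP, sum_product]
  refine sum_congr rfl fun x _ => ?_
  rw [sum_mul]
  refine sum_congr rfl fun i _ => ?_
  linear_combination (u x i * w x i) * hsq.symm

theorem dIP_self_nonneg (hh : 0 ≤ h) (u : (Fin 3 → ℤ) → Fin 3 → ℝ) : 0 ≤ dIP h Ω u u :=
  sum_nonneg fun _ _ => mul_nonneg (sum_nonneg fun _ _ => mul_self_nonneg _) (pow_nonneg hh 3)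

theorem dIP_le_sqrt_mul_sqrt (hh : 0 ≤ h) (u w : (Fin 3 → ℤ) → Fin 3 → ℝ) :
    dIP h Ω u w ≤ √(dIP h Ω u u) * √(dIP h Ω w w) := by
  have hcs := Real.sum_mul_le_sqrt_mul_sqrt (Ω ×ˢ Finset.univ)
    (fun p => √(h ^ 3) * u p.1 p.2) (fun p => √(h ^ 3) * w p.1 p.2)
  simp only [sq] at hcs
  rwa [dIP_eq_sum_sqrt_mul_sqrt hh u w, dIP_eq_sum_sqrt_mul_sqrt hh u u,
    dIP_eq_sum_sqrt_mul_sqrt hh w w]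

theorem sqrt_dIP_le_of_dIP_le (hh : 0 ≤ h) {τ : ℝ} (hτ : 0 ≤ τ) {u v f : (Fin 3 → ℤ) → Fin 3 → ℝ}
    (hle : dIP h Ω v v ≤ dIP h Ω u v + τ * dIP h Ω f v) :
    √(dIP h Ω v v) ≤ √(dIP h Ω u u) + τ * √(dIP h Ω f f) := by
  have hu := dIP_le_sqrt_mul_sqrt (Ω := Ω) hh u v
  have hf := mul_le_mul_of_nonneg_left (dIP_le_sqrt_mul_sqrt (Ω := Ω) hh f v) hτ
  have hv := Real.mul_self_sqrt (dIP_self_nonneg (Ω := Ω) hh v)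
  have hquad : √(dIP h Ω v v) * √(dIP h Ω v v)
      ≤ (√(dIP h Ω u u) + τ * √(dIP h Ω f f)) * √(dIP h Ω v v) := by
    linarith
  rcases (Real.sqrt_nonneg (dIP h Ω v v)).eq_or_lt with hzero | hpos
  · rw [← hzero]
    positivity
  · exact le_of_mul_le_mul_right hquad hpos

end InnerProduct

theorem one_step_energy_bound_general
    (h τ : ℝ) (hh : 0 < h) (hτ : 0 < τ) (Ω : Finset (Fin 3 → ℤ))
    (un f v : (Fin 3 → ℤ) → Fin 3 → ℝ)
    (hdiv : ∀ x ∈ Ω \ gBdry Ω, ddiv h un x = 0)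
    (hv0 : ∀ x, x ∉ Ω → v x = 0) (hvb : ∀ x ∈ gBdry Ω, v x = 0)
    (hscheme : ∀ x ∈ Ω \ gBdry Ω, ∀ i : Fin 3,
      (v x i - un x i) / τ =
        -(∑ j, (un (x - gE j) j * Dp h j (fun y => v y i) (x - gE j)
            + un x j * Dp h j (fun y => v y i) x) / 2)
        + (∑ j, Dtwo h j (fun y => v y i) x) + f x i) :
    dIP h Ω v v + τ * ∑ j, ∑ x ∈ Ω, (∑ i, (Dp h j (fun y => v y i) x) ^ 2) * h ^ 3
        ≤ dIP h Ω un v + τ * dIP h Ω f v ∧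
    Real.sqrt (dIP h Ω v v)
        ≤ Real.sqrt (dIP h Ω un un) + τ * Real.sqrt (dIP h Ω f f) := by
  have hv : ∀ i, ∀ x ∉ Ω \ gBdry Ω, v x i = 0 := by
    intro i x hx
    rw [Finset.mem_sdiff, not_and_or, not_not] at hx
    rcases hx with hx | hx
    · rw [hv0 x hx, Pi.zero_apply]
    · rw [hvb x hx, Pi.zero_apply]
  have hcomponents := sum_congr rfl fun i (_ : i ∈ Finset.univ) =>
    energy_identity hτ.ne' (hv i) hdiv fun x hx => hscheme x hx i
  simp only [sum_add_distrib, ← mul_sum] at hcomponents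
  have hgrad : ∑ j, ∑ x ∈ Ω, (∑ i, (Dp h j (fun y => v y i) x) ^ 2) * h ^ 3
      = (∑ i, ∑ j, ∑ x ∈ Ω, Dp h j (fun y => v y i) x ^ 2) * h ^ 3 := by
    simp only [sum_mul]
    simp_rw [sum_comm (s := Ω) (t := Finset.univ)]
    rw [sum_comm]
  have henergy : dIP h Ω v v + τ * ∑ j, ∑ x ∈ Ω, (∑ i, (Dp h j (fun y => v y i) x) ^ 2) * h ^ 3
      = dIP h Ω un v + τ * dIP h Ω f v := by
    rw [dIP_eq_sum_components, dIP_eq_sum_components, dIP_eq_sum_components, hgrad]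
    linear_combination h ^ 3 * hcomponents
  have hgrad_nonneg : 0 ≤ ∑ j, ∑ x ∈ Ω, (∑ i, (Dp h j (fun y => v y i) x) ^ 2) * h ^ 3 := by
    positivity
  exact ⟨henergy.le, sqrt_dIP_le_of_dIP_le hh.le hτ.le
    ((le_add_of_nonneg_right (mul_nonneg hτ.le hgrad_nonneg)).trans henergy.le)⟩

/-- a priori energy bound for one implicit step. -/
theorem one_step_energy_bound
    (h τ : ℝ) (hh : 0 < h) (hτ : 0 < τ) (Ω : Finset (Fin 3 → ℤ))
    (un f v : (Fin 3 → ℤ) → Fin 3 → ℝ)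
    (hun0 : ∀ x, x ∉ Ω → un x = 0) (hunb : ∀ x ∈ gBdry Ω, un x = 0)
    (hdiv : ∀ x ∈ Ω \ gBdry Ω, ddiv h un x = 0)
    (hv0 : ∀ x, x ∉ Ω → v x = 0) (hvb : ∀ x ∈ gBdry Ω, v x = 0)
    (hscheme : ∀ x ∈ Ω \ gBdry Ω, ∀ i : Fin 3,
      (v x i - un x i) / τ =
        -(∑ j, (un (x - gE j) j * Dp h j (fun y => v y i) (x - gE j)
            + un x j * Dp h j (fun y => v y i) x) / 2)
        + (∑ j, Dtwo h j (fun y => v y i) x) + f x i) :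
    dIP h Ω v v + τ * ∑ j, ∑ x ∈ Ω, (∑ i, (Dp h j (fun y => v y i) x) ^ 2) * h ^ 3
        ≤ dIP h Ω un v + τ * dIP h Ω f v ∧
    Real.sqrt (dIP h Ω v v)
        ≤ Real.sqrt (dIP h Ω un un) + τ * Real.sqrt (dIP h Ω f f) :=
  one_step_energy_bound_general h τ hh hτ Ω un f v hdiv hv0 hvb hscheme
end

section
/- Global discrete energy inequality: let u⁰, u^{n+½}, u^{n+1} = P_h u^{n+½} be the solution of the full discrete scheme on Ω_h with time step τ and forcing f^{m+1}. Then for every n, ‖u^{n+1}‖_{Ω_h}² ≤ ‖u⁰‖_{Ω_h}² − Σ_{m=0}^{n} ( Σ_{j=1}^{3} ‖D_j⁺u^{m+½}‖_{Ω_h}² ) τ + 2 Σ_{m=0}^{n} ‖u^m‖_{Ω_h} ‖f^{m+1}‖_{Ω_h} τ + Σ_{m=0}^{n} ‖f^{m+1}‖_{Ω_h}² τ². In particular the sum of the discrete gradient norms Σ_m Σ_j ‖D_j⁺u^{m+½}‖² τ is bounded independently of the mesh. -/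
open Finset MeasureTheory Set Filter

namespace EnergyAux
abbrev Pt := Fin 3 → ℤ

lemma sum_support_subset {S T : Finset Pt} {G : Pt → ℝ}
    (hG : ∀ y, G y ≠ 0 → y ∈ S ∩ T) : ∑ x ∈ S, G x = ∑ x ∈ T, G x := by
  have h1 : ∑ x ∈ S ∩ T, G x = ∑ x ∈ S, G x :=
    Finset.sum_subset Finset.inter_subset_left
      (fun x _ hx' => by by_contra hne; exact hx' (hG x hne))
  have h2 : ∑ x ∈ S ∩ T, G x = ∑ x ∈ T, G x :=
    Finset.sum_subset Finset.inter_subset_right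
      (fun x _ hx' => by by_contra hne; exact hx' (hG x hne))
  rw [← h1, h2]

lemma sum_shift (Ω : Finset Pt) (e : Pt) (G : Pt → ℝ)
    (hG : ∀ y, G y ≠ 0 → y ∈ Ω ∧ y - e ∈ Ω) :
    ∑ x ∈ Ω, G (x + e) = ∑ y ∈ Ω, G y := by
  have himg : ∑ x ∈ Ω.image (· + e), G x = ∑ x ∈ Ω, G (x + e) :=
    Finset.sum_image (by intro a _ b _ hab; simpa using hab)
  rw [← himg]
  apply sum_support_subset
  intro y hy
  obtain ⟨h1, h2⟩ := hG y hy
  exact Finset.mem_inter.mpr ⟨Finset.mem_image.mpr ⟨y - e, h2, by abel⟩, h1⟩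

lemma interior_closed {Ω : Finset Pt} {x : Pt} (hx : x ∈ Ω \ gBdry Ω) (i : Fin 3) :
    (x + gE i) ∈ Ω ∧ (x - gE i) ∈ Ω := by
  obtain ⟨h1, h2⟩ := Finset.mem_sdiff.mp hx
  rw [gBdry, Finset.mem_filter] at h2
  push_neg at h2
  exact h2 h1 i

lemma sum_wt {c : ℝ} {Ω : Finset Pt} (F : Pt → Fin 3 → ℝ) :
    ∑ x ∈ Ω, (∑ i, F x i) * c = ∑ i, ∑ x ∈ Ω, F x i * c := by
  simp_rw [Finset.sum_mul]; exact Finset.sum_comm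

section main
variable {Ω : Finset Pt}

lemma shift_sq (j : Fin 3) {p : Pt → ℝ}
    (hp : ∀ x, p x ≠ 0 → x ∈ Ω \ gBdry Ω) :
    ∑ x ∈ Ω, (p (x + gE j)) ^ 2 = ∑ x ∈ Ω, (p x) ^ 2 := by
  apply sum_shift Ω (gE j) (fun y => (p y) ^ 2)
  intro y hy
  have hpy : p y ≠ 0 := fun hz => hy (by simp [hz])
  have hI := hp y hpy
  exact ⟨(Finset.mem_sdiff.mp hI).1, (interior_closed hI j).2⟩

lemma shift_mul_back (j : Fin 3) {p : Pt → ℝ}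
    (hp : ∀ x, p x ≠ 0 → x ∈ Ω \ gBdry Ω) :
    ∑ x ∈ Ω, p x * p (x - gE j) = ∑ x ∈ Ω, p x * p (x + gE j) := by
  have := sum_shift Ω (gE j) (fun y => p y * p (y - gE j)) (fun y hy => by
    have h1 : p y ≠ 0 := fun hz => hy (by simp [hz])
    have h2 : p (y - gE j) ≠ 0 := fun hz => hy (by simp [hz])
    exact ⟨(Finset.mem_sdiff.mp (hp y h1)).1, (Finset.mem_sdiff.mp (hp _ h2)).1⟩)
  simp only [add_sub_cancel_right] at this
  rw [← this]
  exact Finset.sum_congr rfl fun x _ => by ring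

lemma lap_scalar (h : ℝ) (hh : 0 < h) (j : Fin 3) {p : Pt → ℝ}
    (hp : ∀ x, p x ≠ 0 → x ∈ Ω \ gBdry Ω) :
    ∑ x ∈ Ω, p x * Dtwo h j p x = -∑ x ∈ Ω, (Dp h j p x) ^ 2 := by
  have s1 := shift_sq (Ω := Ω) j hp
  have s2 := shift_mul_back (Ω := Ω) j hp
  have key : ∑ x ∈ Ω, p x * (p (x + gE j) + p (x - gE j) - 2 * p x)
      = -∑ x ∈ Ω, (p (x + gE j) - p x) ^ 2 := by
    have e1 : ∑ x ∈ Ω, p x * (p (x + gE j) + p (x - gE j) - 2 * p x)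
        = ∑ x ∈ Ω, p x * p (x + gE j) + ∑ x ∈ Ω, p x * p (x - gE j)
          - 2 * ∑ x ∈ Ω, (p x) ^ 2 := by
      rw [← Finset.sum_add_distrib, Finset.mul_sum, ← Finset.sum_sub_distrib]
      exact Finset.sum_congr rfl fun x _ => by ring
    have e2 : ∑ x ∈ Ω, (p (x + gE j) - p x) ^ 2
        = ∑ x ∈ Ω, (p (x + gE j)) ^ 2 + ∑ x ∈ Ω, (p x) ^ 2
          - 2 * ∑ x ∈ Ω, p x * p (x + gE j) := by
      rw [← Finset.sum_add_distrib, Finset.mul_sum, ← Finset.sum_sub_distrib]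
      exact Finset.sum_congr rfl fun x _ => by ring
    rw [e1, e2, s1, s2]; ring
  have h2 : (h : ℝ) ^ 2 ≠ 0 := by positivity
  calc ∑ x ∈ Ω, p x * Dtwo h j p x
      = (∑ x ∈ Ω, p x * (p (x + gE j) + p (x - gE j) - 2 * p x)) / h ^ 2 := by
        rw [Finset.sum_div]; exact Finset.sum_congr rfl fun x _ => by rw [Dtwo]; ring
    _ = (-∑ x ∈ Ω, (p (x + gE j) - p x) ^ 2) / h ^ 2 := by rw [key]
    _ = -∑ x ∈ Ω, (Dp h j p x) ^ 2 := by
        rw [neg_div, Finset.sum_div, neg_inj]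
        exact Finset.sum_congr rfl fun x _ => by rw [Dp, div_pow]

lemma conv_scalar (h : ℝ) (hh : 0 < h) {a : Pt → Fin 3 → ℝ} {p : Pt → ℝ}
    (ha : ∀ x i, a x i ≠ 0 → x ∈ Ω \ gBdry Ω)
    (hp : ∀ x, p x ≠ 0 → x ∈ Ω \ gBdry Ω)
    (hdiva : ∀ x ∈ Ω \ gBdry Ω, ddiv h a x = 0) :
    ∑ x ∈ Ω, p x * (∑ j, (a (x - gE j) j * Dp h j p (x - gE j)
        + a x j * Dp h j p x) / 2) = 0 := by
  have key : ∀ j : Fin 3,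
      ∑ x ∈ Ω, p x * (a (x - gE j) j * Dp h j p (x - gE j) + a x j * Dp h j p x)
      = ∑ x ∈ Ω, (a (x - gE j) j - a x j) * (p x) ^ 2 / h := by
    intro j
    have sh1 := sum_shift Ω (gE j)
      (fun y => p y * (a (y - gE j) j * Dp h j p (y - gE j)))
      (fun y hy => by
        have h2 : a (y - gE j) j ≠ 0 := fun hz => hy (by simp [hz])
        have hI := ha _ _ h2
        refine ⟨?_, (Finset.mem_sdiff.mp hI).1⟩
        have := (interior_closed hI j).1
        simpa using this)
    simp only [add_sub_cancel_right] at sh1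
    have sh2 := sum_shift Ω (gE j)
      (fun y => a (y - gE j) j * (p y) ^ 2)
      (fun y hy => by
        have h2 : a (y - gE j) j ≠ 0 := fun hz => hy (by simp [hz])
        have hI := ha _ _ h2
        refine ⟨?_, (Finset.mem_sdiff.mp hI).1⟩
        have := (interior_closed hI j).1
        simpa using this)
    simp only [add_sub_cancel_right] at sh2
    calc ∑ x ∈ Ω, p x * (a (x - gE j) j * Dp h j p (x - gE j) + a x j * Dp h j p x)
        = ∑ x ∈ Ω, p x * (a (x - gE j) j * Dp h j p (x - gE j))
          + ∑ x ∈ Ω, p x * (a x j * Dp h j p x) := by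
          rw [← Finset.sum_add_distrib]
          exact Finset.sum_congr rfl fun x _ => by ring
      _ = ∑ x ∈ Ω, p (x + gE j) * (a x j * Dp h j p x)
          + ∑ x ∈ Ω, p x * (a x j * Dp h j p x) := by rw [← sh1]
      _ = ∑ x ∈ Ω, (a x j * (p (x + gE j)) ^ 2 - a x j * (p x) ^ 2) / h := by
          rw [← Finset.sum_add_distrib]
          refine Finset.sum_congr rfl fun x _ => ?_
          rw [Dp]; field_simp; ring
      _ = (∑ x ∈ Ω, a x j * (p (x + gE j)) ^ 2 - ∑ x ∈ Ω, a x j * (p x) ^ 2) / h := by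
          rw [← Finset.sum_sub_distrib, Finset.sum_div]
      _ = (∑ x ∈ Ω, a (x - gE j) j * (p x) ^ 2 - ∑ x ∈ Ω, a x j * (p x) ^ 2) / h := by
          rw [← sh2]
      _ = ∑ x ∈ Ω, (a (x - gE j) j - a x j) * (p x) ^ 2 / h := by
          rw [← Finset.sum_sub_distrib, Finset.sum_div]
          exact Finset.sum_congr rfl fun x _ => by ring
  calc ∑ x ∈ Ω, p x * (∑ j, (a (x - gE j) j * Dp h j p (x - gE j)
          + a x j * Dp h j p x) / 2)
      = ∑ x ∈ Ω, ∑ j, p x * (a (x - gE j) j * Dp h j p (x - gE j)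
          + a x j * Dp h j p x) / 2 := by
        refine Finset.sum_congr rfl fun x _ => ?_
        rw [Finset.mul_sum]
        exact Finset.sum_congr rfl fun j _ => by ring
    _ = ∑ j, ∑ x ∈ Ω, p x * (a (x - gE j) j * Dp h j p (x - gE j)
          + a x j * Dp h j p x) / 2 := Finset.sum_comm
    _ = ∑ j, (∑ x ∈ Ω, p x * (a (x - gE j) j * Dp h j p (x - gE j)
          + a x j * Dp h j p x)) / 2 := by
        exact Finset.sum_congr rfl fun j _ => (Finset.sum_div ..).symm
    _ = ∑ j, (∑ x ∈ Ω, (a (x - gE j) j - a x j) * (p x) ^ 2 / h) / 2 := by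
        exact Finset.sum_congr rfl fun j _ => by rw [key j]
    _ = ∑ x ∈ Ω, ∑ j, ((a (x - gE j) j - a x j) * (p x) ^ 2 / h) / 2 := by
        rw [Finset.sum_comm]
        exact Finset.sum_congr rfl fun j _ => by rw [Finset.sum_div]
    _ = 0 := by
        apply Finset.sum_eq_zero
        intro x hx
        by_cases hpx : p x = 0
        · simp [hpx]
        · have hd := hdiva x (hp x hpx)
          simp only [ddiv] at hd
          have : ∑ j, ((a (x - gE j) j - a x j) * (p x) ^ 2 / h) / 2
              = (-(p x) ^ 2 / 2) * ∑ j, (a x j - a (x - gE j) j) / h := by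
            rw [Finset.mul_sum]
            exact Finset.sum_congr rfl fun j _ => by ring
          rw [this, hd, mul_zero]


lemma dIP_nonneg (h : ℝ) (hh : 0 < h) (Ω : Finset Pt) (u : Pt → Fin 3 → ℝ) :
    0 ≤ dIP h Ω u u :=
  Finset.sum_nonneg fun x _ =>
    mul_nonneg (Finset.sum_nonneg fun i _ => mul_self_nonneg _) (by positivity)

lemma dIP_cs (h : ℝ) (hh : 0 < h) (Ω : Finset Pt) (a b : Pt → Fin 3 → ℝ) :
    dIP h Ω a b ≤ Real.sqrt (dIP h Ω a a) * Real.sqrt (dIP h Ω b b) := by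
  have hc : (0:ℝ) ≤ h ^ 3 := by positivity
  set c := Real.sqrt (h ^ 3) with hcdef
  have hc2 : c * c = h ^ 3 := Real.mul_self_sqrt hc
  have key : ∀ p q : Pt → Fin 3 → ℝ, dIP h Ω p q =
      ∑ z ∈ Ω ×ˢ (Finset.univ : Finset (Fin 3)), (p z.1 z.2 * c) * (q z.1 z.2 * c) := by
    intro p q
    rw [Finset.sum_product]
    refine Finset.sum_congr rfl fun x _ => ?_
    rw [Finset.sum_mul]
    exact Finset.sum_congr rfl fun i _ => by rw [← hc2]; ring
  rw [key, key, key]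
  have := Real.sum_mul_le_sqrt_mul_sqrt (Ω ×ˢ (Finset.univ : Finset (Fin 3)))
    (fun z => a z.1 z.2 * c) (fun z => b z.1 z.2 * c)
  simpa [sq] using this


lemma proj_ortho (h : ℝ) (hh : 0 < h) {u' : Pt → Fin 3 → ℝ} {φ : Pt → ℝ}
    (hu' : ∀ x i, u' x i ≠ 0 → x ∈ Ω \ gBdry Ω)
    (hφ : ∀ x, φ x ≠ 0 → x ∈ Ω \ gBdry Ω)
    (hdivu' : ∀ x ∈ Ω \ gBdry Ω, ddiv h u' x = 0) :
    ∑ x ∈ Ω, ∑ i, u' x i * Dp h i φ x = 0 := by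
  rw [Finset.sum_comm]
  have key : ∀ i : Fin 3, ∑ x ∈ Ω, u' x i * Dp h i φ x
      = ∑ x ∈ Ω, (u' (x - gE i) i - u' x i) * φ x / h := by
    intro i
    have shi := sum_shift Ω (gE i) (fun y => u' (y - gE i) i * φ y) (fun y hy => by
      have h2 : u' (y - gE i) i ≠ 0 := fun hz => hy (by simp [hz])
      have hI := hu' _ _ h2
      refine ⟨?_, (Finset.mem_sdiff.mp hI).1⟩
      have := (interior_closed hI i).1
      simpa using this)
    simp only [add_sub_cancel_right] at shi
    calc ∑ x ∈ Ω, u' x i * Dp h i φ x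
        = (∑ x ∈ Ω, u' x i * φ (x + gE i) - ∑ x ∈ Ω, u' x i * φ x) / h := by
          rw [← Finset.sum_sub_distrib, Finset.sum_div]
          exact Finset.sum_congr rfl fun x _ => by rw [Dp]; ring
      _ = (∑ x ∈ Ω, u' (x - gE i) i * φ x - ∑ x ∈ Ω, u' x i * φ x) / h := by rw [shi]
      _ = ∑ x ∈ Ω, (u' (x - gE i) i - u' x i) * φ x / h := by
          rw [← Finset.sum_sub_distrib, Finset.sum_div]
          exact Finset.sum_congr rfl fun x _ => by ring
  calc ∑ i, ∑ x ∈ Ω, u' x i * Dp h i φ x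
      = ∑ i, ∑ x ∈ Ω, (u' (x - gE i) i - u' x i) * φ x / h :=
        Finset.sum_congr rfl fun i _ => key i
    _ = ∑ x ∈ Ω, ∑ i, (u' (x - gE i) i - u' x i) * φ x / h := Finset.sum_comm
    _ = 0 := by
        apply Finset.sum_eq_zero
        intro x hx
        by_cases hφx : φ x = 0
        · simp [hφx]
        · have hd := hdivu' x (hφ x hφx)
          simp only [ddiv] at hd
          have e : ∑ i, (u' (x - gE i) i - u' x i) * φ x / h
              = (-(φ x)) * ∑ i, (u' x i - u' (x - gE i) i) / h := by
            rw [Finset.mul_sum]; exact Finset.sum_congr rfl fun i _ => by ring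
          rw [e, hd, mul_zero]


lemma energy_identity (h τ : ℝ) (hh : 0 < h) (hτ : 0 < τ) {Ω : Finset Pt}
    {a w g : Pt → Fin 3 → ℝ}
    (ha : ∀ x i, a x i ≠ 0 → x ∈ Ω \ gBdry Ω)
    (hw : ∀ x i, w x i ≠ 0 → x ∈ Ω \ gBdry Ω)
    (hdiva : ∀ x ∈ Ω \ gBdry Ω, ddiv h a x = 0)
    (hsch : ∀ x ∈ Ω \ gBdry Ω, ∀ i : Fin 3,
      (w x i - a x i) / τ =
        -(∑ j, (a (x - gE j) j * Dp h j (fun y => w y i) (x - gE j)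
            + a x j * Dp h j (fun y => w y i) x) / 2)
        + (∑ j, Dtwo h j (fun y => w y i) x) + g x i) :
    dIP h Ω w w = dIP h Ω a w
      - τ * (∑ j, ∑ x ∈ Ω, (∑ i, (Dp h j (fun y => w y i) x) ^ 2) * h ^ 3)
      + τ * dIP h Ω g w := by
  -- pointwise multiplied identity
  have pw : ∀ x ∈ Ω, ∀ i : Fin 3,
      w x i * w x i - a x i * w x i =
        τ * (-(w x i * (∑ j, (a (x - gE j) j * Dp h j (fun y => w y i) (x - gE j)
              + a x j * Dp h j (fun y => w y i) x) / 2))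
          + w x i * (∑ j, Dtwo h j (fun y => w y i) x)
          + w x i * g x i) := by
    intro x hx i
    by_cases hxI : x ∈ Ω \ gBdry Ω
    · have hs := hsch x hxI i
      have h1 := (div_eq_iff hτ.ne').mp hs
      linear_combination (w x i) * h1
    · have hz : w x i = 0 := by
        by_contra hz; exact hxI (hw x i hz)
      simp [hz]
  -- summed identity
  have main : dIP h Ω w w - dIP h Ω a w
      = τ * (-(∑ x ∈ Ω, (∑ i, w x i * (∑ j, (a (x - gE j) j * Dp h j (fun y => w y i) (x - gE j)
              + a x j * Dp h j (fun y => w y i) x) / 2)) * h ^ 3)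
          + (∑ x ∈ Ω, (∑ i, w x i * (∑ j, Dtwo h j (fun y => w y i) x)) * h ^ 3)
          + (∑ x ∈ Ω, (∑ i, w x i * g x i) * h ^ 3)) := by
    unfold dIP
    rw [← Finset.sum_sub_distrib]
    have perx : ∀ x ∈ Ω, (∑ i, w x i * w x i) * h ^ 3 - (∑ i, a x i * w x i) * h ^ 3
        = τ * ((-(∑ i, w x i * (∑ j, (a (x - gE j) j * Dp h j (fun y => w y i) (x - gE j)
              + a x j * Dp h j (fun y => w y i) x) / 2))
          + (∑ i, w x i * (∑ j, Dtwo h j (fun y => w y i) x))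
          + (∑ i, w x i * g x i)) * h ^ 3) := by
      intro x hx
      have hsum : ∑ i, (w x i * w x i - a x i * w x i)
          = τ * ∑ i, (-(w x i * (∑ j, (a (x - gE j) j * Dp h j (fun y => w y i) (x - gE j)
                + a x j * Dp h j (fun y => w y i) x) / 2))
            + w x i * (∑ j, Dtwo h j (fun y => w y i) x)
            + w x i * g x i) := by
        rw [Finset.mul_sum]; exact Finset.sum_congr rfl fun i _ => pw x hx i
      rw [Finset.sum_sub_distrib] at hsum
      rw [Finset.sum_add_distrib, Finset.sum_add_distrib, Finset.sum_neg_distrib] at hsum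
      linear_combination h ^ 3 * hsum
    rw [Finset.sum_congr rfl perx, ← Finset.mul_sum]
    congr 1
    simp only [add_mul, neg_mul]
    rw [Finset.sum_add_distrib, Finset.sum_add_distrib, Finset.sum_neg_distrib]
  -- convection term vanishes
  have hC0 : ∑ x ∈ Ω, (∑ i, w x i * (∑ j, (a (x - gE j) j * Dp h j (fun y => w y i) (x - gE j)
        + a x j * Dp h j (fun y => w y i) x) / 2)) * h ^ 3 = 0 := by
    rw [sum_wt]
    apply Finset.sum_eq_zero
    intro i _
    have h0 : ∑ x ∈ Ω, w x i * (∑ j, (a (x - gE j) j * Dp h j (fun y => w y i) (x - gE j)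
        + a x j * Dp h j (fun y => w y i) x) / 2) = 0 :=
      conv_scalar h hh ha (fun x hx => hw x i hx) hdiva
    rw [← Finset.sum_mul, h0, zero_mul]
  -- viscous term
  have hL : ∑ x ∈ Ω, (∑ i, w x i * (∑ j, Dtwo h j (fun y => w y i) x)) * h ^ 3
      = - ∑ j, ∑ x ∈ Ω, (∑ i, (Dp h j (fun y => w y i) x) ^ 2) * h ^ 3 := by
    rw [sum_wt]
    have perI : ∀ i : Fin 3, ∑ x ∈ Ω, (w x i * (∑ j, Dtwo h j (fun y => w y i) x)) * h ^ 3
        = ∑ j, -((∑ x ∈ Ω, (Dp h j (fun y => w y i) x) ^ 2) * h ^ 3) := by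
      intro i
      have e1 : ∀ x ∈ Ω, (w x i * (∑ j, Dtwo h j (fun y => w y i) x)) * h ^ 3
          = ∑ j, (w x i * Dtwo h j (fun y => w y i) x) * h ^ 3 := by
        intro x _; rw [Finset.mul_sum, Finset.sum_mul]
      rw [Finset.sum_congr rfl e1, Finset.sum_comm]
      refine Finset.sum_congr rfl fun j _ => ?_
      have h0 : ∑ x ∈ Ω, w x i * Dtwo h j (fun y => w y i) x
          = -∑ x ∈ Ω, (Dp h j (fun y => w y i) x) ^ 2 :=
        lap_scalar h hh j (fun x hx => hw x i hx)
      rw [← Finset.sum_mul, h0]; ring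
    rw [Finset.sum_congr rfl (fun i _ => perI i), Finset.sum_comm, ← Finset.sum_neg_distrib]
    refine Finset.sum_congr rfl fun j _ => ?_
    rw [Finset.sum_neg_distrib, neg_inj]
    calc ∑ i, (∑ x ∈ Ω, (Dp h j (fun y => w y i) x) ^ 2) * h ^ 3
        = ∑ i, ∑ x ∈ Ω, (Dp h j (fun y => w y i) x) ^ 2 * h ^ 3 := by
          exact Finset.sum_congr rfl fun i _ => Finset.sum_mul ..
      _ = ∑ x ∈ Ω, ∑ i, (Dp h j (fun y => w y i) x) ^ 2 * h ^ 3 := Finset.sum_comm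
      _ = ∑ x ∈ Ω, (∑ i, (Dp h j (fun y => w y i) x) ^ 2) * h ^ 3 := by
          exact Finset.sum_congr rfl fun x _ => (Finset.sum_mul ..).symm
  -- forcing term
  have hF : ∑ x ∈ Ω, (∑ i, w x i * g x i) * h ^ 3 = dIP h Ω g w := by
    unfold dIP
    refine Finset.sum_congr rfl fun x _ => ?_
    congr 1
    exact Finset.sum_congr rfl fun i _ => mul_comm _ _
  rw [hC0, hL, hF] at main
  linarith [main]

end main
end EnergyAux

open EnergyAux in
/-- Theorem 4.1, estimate (4.3): global discrete energy
inequality for the full projection scheme `u^{m} → u^{m+½} → u^{m+1} = P_h u^{m+½}`. -/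
theorem global_energy_inequality
    (h τ : ℝ) (hh : 0 < h) (hτ : 0 < τ) (Ω : Finset (Fin 3 → ℤ))
    (u v f : ℕ → (Fin 3 → ℤ) → Fin 3 → ℝ)
    (hu0 : ∀ m, ∀ x, x ∉ Ω → u m x = 0) (hub : ∀ m, ∀ x ∈ gBdry Ω, u m x = 0)
    (hdiv : ∀ m, ∀ x ∈ Ω \ gBdry Ω, ddiv h (u m) x = 0)
    (hv0 : ∀ m, ∀ x, x ∉ Ω → v m x = 0) (hvb : ∀ m, ∀ x ∈ gBdry Ω, v m x = 0)
    (hscheme : ∀ m, ∀ x ∈ Ω \ gBdry Ω, ∀ i : Fin 3,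
      (v m x i - u m x i) / τ =
        -(∑ j, (u m (x - gE j) j * Dp h j (fun y => v m y i) (x - gE j)
            + u m x j * Dp h j (fun y => v m y i) x) / 2)
        + (∑ j, Dtwo h j (fun y => v m y i) x) + f m x i)
    (hproj : ∀ m, ∃ φ : (Fin 3 → ℤ) → ℝ, (∀ x, x ∉ Ω → φ x = 0) ∧
      (∀ x ∈ gBdry Ω, φ x = 0) ∧
      ∀ x ∈ Ω \ gBdry Ω, u (m + 1) x + dgrad h φ x = v m x) :
    ∀ n : ℕ,
      dIP h Ω (u (n + 1)) (u (n + 1)) ≤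
        dIP h Ω (u 0) (u 0)
        - (∑ m ∈ Finset.range (n + 1),
            (∑ j, ∑ x ∈ Ω, (∑ i, (Dp h j (fun y => v m y i) x) ^ 2) * h ^ 3) * τ)
        + 2 * ∑ m ∈ Finset.range (n + 1),
            Real.sqrt (dIP h Ω (u m) (u m)) * Real.sqrt (dIP h Ω (f m) (f m)) * τ
        + ∑ m ∈ Finset.range (n + 1), dIP h Ω (f m) (f m) * τ ^ 2 := by
  classical
  have hsupp : ∀ (g : (Fin 3 → ℤ) → Fin 3 → ℝ), (∀ x, x ∉ Ω → g x = 0) →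
      (∀ x ∈ gBdry Ω, g x = 0) → ∀ x i, g x i ≠ 0 → x ∈ Ω \ gBdry Ω := by
    intro g h0 hb x i hne
    by_cases hxΩ : x ∈ Ω
    · exact Finset.mem_sdiff.mpr ⟨hxΩ, fun hbd => hne (congrFun (hb x hbd) i)⟩
    · exact absurd (congrFun (h0 x hxΩ) i) hne
  have step : ∀ m : ℕ, dIP h Ω (u (m+1)) (u (m+1)) ≤ dIP h Ω (u m) (u m)
      - (∑ j, ∑ x ∈ Ω, (∑ i, (Dp h j (fun y => v m y i) x) ^ 2) * h ^ 3) * τ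
      + 2 * (Real.sqrt (dIP h Ω (u m) (u m)) * Real.sqrt (dIP h Ω (f m) (f m)) * τ)
      + dIP h Ω (f m) (f m) * τ ^ 2 := by
    intro m
    have hus := hsupp (u m) (hu0 m) (hub m)
    have hvs := hsupp (v m) (hv0 m) (hvb m)
    have hus' := hsupp (u (m+1)) (hu0 (m+1)) (hub (m+1))
    have energy := energy_identity h τ hh hτ hus hvs (hdiv m) (hscheme m)
    set G := ∑ j, ∑ x ∈ Ω, (∑ i, (Dp h j (fun y => v m y i) x) ^ 2) * h ^ 3 with hG
    have hGnn : 0 ≤ G := by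
      apply Finset.sum_nonneg; intro j _; apply Finset.sum_nonneg; intro x _
      exact mul_nonneg (Finset.sum_nonneg fun i _ => sq_nonneg _) (by positivity)
    set A := Real.sqrt (dIP h Ω (u m) (u m)) with hA
    set W := Real.sqrt (dIP h Ω (v m) (v m)) with hW
    set F := Real.sqrt (dIP h Ω (f m) (f m)) with hF
    have hAnn : 0 ≤ A := Real.sqrt_nonneg _
    have hWnn : 0 ≤ W := Real.sqrt_nonneg _
    have hFnn : 0 ≤ F := Real.sqrt_nonneg _
    have hA2 : A * A = dIP h Ω (u m) (u m) := Real.mul_self_sqrt (dIP_nonneg h hh Ω _)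
    have hW2 : W * W = dIP h Ω (v m) (v m) := Real.mul_self_sqrt (dIP_nonneg h hh Ω _)
    have hF2 : F * F = dIP h Ω (f m) (f m) := Real.mul_self_sqrt (dIP_nonneg h hh Ω _)
    have csu : dIP h Ω (u m) (v m) ≤ A * W := dIP_cs h hh Ω _ _
    have csf : dIP h Ω (f m) (v m) ≤ F * W := dIP_cs h hh Ω _ _
    obtain ⟨φ, hφ0, hφb, hφeq⟩ := hproj m
    have hφs : ∀ x, φ x ≠ 0 → x ∈ Ω \ gBdry Ω := by
      intro x hne
      by_cases hxΩ : x ∈ Ω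
      · exact Finset.mem_sdiff.mpr ⟨hxΩ, fun hbd => hne (hφb x hbd)⟩
      · exact absurd (hφ0 x hxΩ) hne
    have portho : ∑ x ∈ Ω, ∑ i, u (m+1) x i * Dp h i φ x = 0 :=
      proj_ortho h hh hus' hφs (hdiv (m+1))
    have hprojeq : dIP h Ω (u (m+1)) (v m) = dIP h Ω (u (m+1)) (u (m+1)) := by
      have e1 : dIP h Ω (u (m+1)) (v m) - dIP h Ω (u (m+1)) (u (m+1))
          = ∑ x ∈ Ω, (∑ i, u (m+1) x i * Dp h i φ x) * h ^ 3 := by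
        unfold dIP
        rw [← Finset.sum_sub_distrib]
        refine Finset.sum_congr rfl fun x hx => ?_
        rw [← sub_mul]
        congr 1
        rw [← Finset.sum_sub_distrib]
        refine Finset.sum_congr rfl fun i _ => ?_
        by_cases hz : u (m+1) x i = 0
        · simp [hz]
        · have hI := hus' x i hz
          have hcf := congrFun (hφeq x hI) i
          have hvi : u (m+1) x i + Dp h i φ x = v m x i := by
            simpa [dgrad] using hcf
          rw [← hvi]; ring
      have e2 : ∑ x ∈ Ω, (∑ i, u (m+1) x i * Dp h i φ x) * h ^ 3 = 0 := by
        rw [← Finset.sum_mul, portho, zero_mul]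
      linarith [e1, e2]
    have hcontr : dIP h Ω (u (m+1)) (u (m+1)) ≤ dIP h Ω (v m) (v m) := by
      have cs' : dIP h Ω (u (m+1)) (v m)
          ≤ Real.sqrt (dIP h Ω (u (m+1)) (u (m+1))) * W := dIP_cs h hh Ω _ _
      set P := Real.sqrt (dIP h Ω (u (m+1)) (u (m+1))) with hP
      have hPnn : 0 ≤ P := Real.sqrt_nonneg _
      have hP2 : P * P = dIP h Ω (u (m+1)) (u (m+1)) := Real.mul_self_sqrt (dIP_nonneg h hh Ω _)
      nlinarith [sq_nonneg (P - W), cs', hprojeq, hP2, hW2]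
    have h3 : τ * dIP h Ω (f m) (v m) ≤ τ * (F * W) :=
      mul_le_mul_of_nonneg_left csf hτ.le
    have hWbound : W * W + τ * G ≤ (A + τ * F) * W := by
      nlinarith [csu, h3, energy, hW2]
    have hfinal : W * W ≤ A * A - τ * G + 2 * (A * F * τ) + F * F * τ ^ 2 := by
      nlinarith [hWbound, sq_nonneg (A + τ * F - W), mul_nonneg hτ.le hGnn]
    calc dIP h Ω (u (m+1)) (u (m+1)) ≤ dIP h Ω (v m) (v m) := hcontr
      _ = W * W := hW2.symm
      _ ≤ A * A - τ * G + 2 * (A * F * τ) + F * F * τ ^ 2 := hfinal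
      _ = dIP h Ω (u m) (u m) - G * τ
          + 2 * (A * F * τ) + dIP h Ω (f m) (f m) * τ ^ 2 := by
          rw [hA2, hF2]; ring
  intro n
  induction n with
  | zero =>
    have := step 0
    simpa [Finset.sum_range_one] using this
  | succ n ih =>
    rw [Finset.sum_range_succ
          (f := fun m => (∑ j, ∑ x ∈ Ω, (∑ i, (Dp h j (fun y => v m y i) x) ^ 2) * h ^ 3) * τ)
          (n := n + 1),
        Finset.sum_range_succ
          (f := fun m => Real.sqrt (dIP h Ω (u m) (u m)) * Real.sqrt (dIP h Ω (f m) (f m)) * τ)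
          (n := n + 1),
        Finset.sum_range_succ
          (f := fun m => dIP h Ω (f m) (f m) * τ ^ 2)
          (n := n + 1)]
    have hs := step (n + 1)
    linarith
end
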